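/- Let (X,d,W) be a UCW-hyperbolic space with monotone modulus of uniform convexity η, C ⊆ X a nonempty convex subset, T : C → C nonexpansive, (λ_n),(s_n) sequences in [0,1], (x_n) the Ishikawa iteration starting with x ∈ C, y_n := (1−s_n)x_n ⊕ s_n T x_n, and p a fixed point of T. Assume moreover that η can be written as η(r,ε) = ε·η̃(r,ε) where η̃ increases in ε for each fixed r. Let n ∈ ℕ and δ, a > 0 satisfy d(x_n,p) ≤ δ and a ≤ d(x_n, Ty_n). Then d(x_{n+1}, p) ≤ d(x_n, p) − 2aλ_n(1−λ_n)·η̃(δ, a/δ). -/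

import Mathlib

open Set Filter Metric Bornology Function

/-- A `W`-hyperbolic space structure on a metric space `X` (Kohlenbach).
`W x y l` denotes `(1-l)x ⊕ l y`. -/
structure WHyp (X : Type*) [MetricSpace X] where
  W : X → X → ℝ → X
  W1 : ∀ (x y z : X), ∀ l ∈ Set.Icc (0:ℝ) 1,
    dist z (W x y l) ≤ (1 - l) * dist z x + l * dist z y
  W2 : ∀ (x y : X), ∀ l ∈ Set.Icc (0:ℝ) 1, ∀ l' ∈ Set.Icc (0:ℝ) 1,
    dist (W x y l) (W x y l') = |l - l'| * dist x y
  W3 : ∀ (x y : X), ∀ l ∈ Set.Icc (0:ℝ) 1, W x y l = W y x (1 - l)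
  W4 : ∀ (x y z w : X), ∀ l ∈ Set.Icc (0:ℝ) 1,
    dist (W x z l) (W y w l) ≤ (1 - l) * dist x y + l * dist z w

/-- `η` is a modulus of uniform convexity for the `W`-hyperbolic space `H`. -/
def WHyp.UnifConvex {X : Type*} [MetricSpace X] (H : WHyp X) (η : ℝ → ℝ → ℝ) : Prop :=
  (∀ r ε : ℝ, 0 < r → ε ∈ Set.Ioc (0:ℝ) 2 → η r ε ∈ Set.Ioc (0:ℝ) 1) ∧
  (∀ (r ε : ℝ) (a x y : X), 0 < r → ε ∈ Set.Ioc (0:ℝ) 2 →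
    dist x a ≤ r → dist y a ≤ r → ε * r ≤ dist x y →
    dist (H.W x y (1/2)) a ≤ (1 - η r ε) * r)

/-- A modulus of uniform convexity is monotone if it decreases in `r` for fixed `ε`. -/
def MonotoneModulus (η : ℝ → ℝ → ℝ) : Prop :=
  ∀ r s ε : ℝ, 0 < r → r ≤ s → ε ∈ Set.Ioc (0:ℝ) 2 → η s ε ≤ η r ε

/-- A subset `C` is convex in the `W`-hyperbolic space `H`. -/
def WHyp.ConvexSet {X : Type*} [MetricSpace X] (H : WHyp X) (C : Set X) : Prop :=
  ∀ x ∈ C, ∀ y ∈ C, ∀ l ∈ Set.Icc (0:ℝ) 1, H.W x y l ∈ C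

/-- The Ishikawa iteration: `x₀ = x`,
`x_{n+1} = (1-λ_n)x_n ⊕ λ_n T((1-s_n)x_n ⊕ s_n T x_n)`. -/
def WHyp.ishSeq {X : Type*} [MetricSpace X] (H : WHyp X) (T : X → X) (l s : ℕ → ℝ)
    (x : X) : ℕ → X
  | 0 => x
  | n + 1 =>
      H.W (H.ishSeq T l s x n)
        (T (H.W (H.ishSeq T l s x n) (T (H.ishSeq T l s x n)) (s n))) (l n)

/-!
Put `d = d(xₙ, p)`. As `p` is a fixed point of the nonexpansive `T`, both `xₙ` and `T yₙ` lie
in the closed ball of radius `d` around `p`, and they are at least `a` apart. Uniform convexity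
at scale `d` with `ε = a/d` gives `d(xₙ₊₁, p) ≤ (1 - 2λₙ(1-λₙ) η(d, a/d)) d`: for `λ ≤ 1/2`,
uniqueness of geodesics in a uniformly convex space gives `(1-λ)x ⊕ λy = (1-2λ)x ⊕ 2λm` with
`m` the midpoint of `x` and `y`, and (W1) then applies the midpoint estimate with weight `2λ`.
Finally `η(d, a/d) d = a η̃(d, a/d) ≥ a η̃(δ, a/δ)`, since `d ≤ δ`, `η` decreases in `r` and
`η̃` increases in `ε`.
-/

namespace WHyp

variable {X : Type*} [MetricSpace X] (H : WHyp X)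

lemma W_zero (x y : X) : H.W x y 0 = x :=
  (dist_le_zero.1 (by simpa using H.W1 x y x 0 ⟨le_rfl, zero_le_one⟩)).symm

lemma W_one (x y : X) : H.W x y 1 = y :=
  (dist_le_zero.1 (by simpa using H.W1 x y y 1 ⟨zero_le_one, le_rfl⟩)).symm

lemma dist_W_left (x y : X) {l : ℝ} (hl : l ∈ Icc (0:ℝ) 1) :
    dist x (H.W x y l) = l * dist x y := by
  have h := H.W2 x y l hl 0 ⟨le_rfl, zero_le_one⟩
  rwa [H.W_zero, sub_zero, abs_of_nonneg hl.1, dist_comm] at h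

lemma dist_W_right (x y : X) {l : ℝ} (hl : l ∈ Icc (0:ℝ) 1) :
    dist y (H.W x y l) = (1 - l) * dist x y := by
  have h := H.W2 x y l hl 1 ⟨zero_le_one, le_rfl⟩
  rw [H.W_one, abs_of_nonpos (by linarith [hl.2]), dist_comm] at h
  rw [h]; ring

lemma dist_W_le_of_le {x y a : X} {r l : ℝ} (hxa : dist x a ≤ r) (hya : dist y a ≤ r)
    (hl : l ∈ Icc (0:ℝ) 1) : dist (H.W x y l) a ≤ r := by
  have h := H.W1 x y a l hl
  rw [dist_comm a x, dist_comm a y, dist_comm a] at h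
  nlinarith [hl.1, hl.2]

lemma dist_W_half_lt {η : ℝ → ℝ → ℝ} (hU : H.UnifConvex η) {x y a : X} {r : ℝ}
    (hxa : dist x a ≤ r) (hya : dist y a ≤ r) (hxy : x ≠ y) :
    dist (H.W x y (1/2)) a < r := by
  have hd : 0 < dist x y := dist_pos.2 hxy
  have h2r : dist x y ≤ 2 * r := by linarith [dist_triangle_right x y a]
  have hr : 0 < r := by linarith
  have hε : dist x y / r ∈ Ioc (0:ℝ) 2 := ⟨by positivity, (div_le_iff₀ hr).2 h2r⟩
  have hmid := hU.2 r _ a x y hr hε hxa hya (div_mul_cancel₀ _ hr.ne').le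
  nlinarith [(hU.1 r _ hr hε).1]

/-- If `u ≠ (1-l)x ⊕ l y`, the midpoint of these two points would be strictly closer to both
`x` and `y` than they are, contradicting the triangle inequality. -/
lemma eq_W_of_dist_eq {η : ℝ → ℝ → ℝ} (hU : H.UnifConvex η) {x y u : X} {l : ℝ}
    (hl : l ∈ Icc (0:ℝ) 1) (hux : dist u x = l * dist x y)
    (huy : dist u y = (1 - l) * dist x y) : u = H.W x y l := by
  by_contra hne
  have hzx : dist (H.W x y l) x = l * dist x y := by rw [dist_comm, H.dist_W_left x y hl]
  have hzy : dist (H.W x y l) y = (1 - l) * dist x y := by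
    rw [dist_comm, H.dist_W_right x y hl]
  have hmx := H.dist_W_half_lt hU hux.le hzx.le hne
  have hmy := H.dist_W_half_lt hU huy.le hzy.le hne
  linarith [dist_triangle_left x y (H.W u (H.W x y l) (1/2))]

lemma W_W_half {η : ℝ → ℝ → ℝ} (hU : H.UnifConvex η) (x y : X) {l : ℝ}
    (hl : l ∈ Icc (0:ℝ) (1/2)) : H.W x (H.W x y (1/2)) (2 * l) = H.W x y l := by
  have hhalf : (1/2 : ℝ) ∈ Icc (0:ℝ) 1 := by norm_num
  have h2l : 2 * l ∈ Icc (0:ℝ) 1 := ⟨by linarith [hl.1], by linarith [hl.2]⟩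
  have hxm := H.dist_W_left x y hhalf
  have hmy : dist (H.W x y (1/2)) y = 1/2 * dist x y := by
    rw [dist_comm, H.dist_W_right x y hhalf]; ring
  have hvx : dist (H.W x (H.W x y (1/2)) (2 * l)) x = l * dist x y := by
    rw [dist_comm, H.dist_W_left _ _ h2l, hxm]; ring
  have hvm := H.dist_W_right x (H.W x y (1/2)) h2l
  refine H.eq_W_of_dist_eq hU ⟨hl.1, by linarith [hl.2]⟩ hvx (le_antisymm ?_ ?_)
  · nlinarith [dist_triangle_left (H.W x (H.W x y (1/2)) (2 * l)) y (H.W x y (1/2)), hl.2,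
      dist_nonneg (x := x) (y := y)]
  · linarith [dist_triangle_left x y (H.W x (H.W x y (1/2)) (2 * l))]

lemma dist_W_le_of_le_half {η : ℝ → ℝ → ℝ} (hU : H.UnifConvex η) {r ε : ℝ} (hr : 0 < r)
    (hε : ε ∈ Ioc (0:ℝ) 2) {a x y : X} (hxa : dist x a ≤ r) (hya : dist y a ≤ r)
    (hxy : ε * r ≤ dist x y) {l : ℝ} (hl : l ∈ Icc (0:ℝ) (1/2)) :
    dist (H.W x y l) a ≤ (1 - 2 * l * η r ε) * r := by
  have h2l : 2 * l ∈ Icc (0:ℝ) 1 := ⟨by linarith [hl.1], by linarith [hl.2]⟩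
  have hmid := hU.2 r ε a x y hr hε hxa hya hxy
  rw [← H.W_W_half hU x y hl, dist_comm]
  calc dist a (H.W x (H.W x y (1/2)) (2 * l))
      ≤ (1 - 2 * l) * dist a x + 2 * l * dist a (H.W x y (1/2)) := H.W1 _ _ a _ h2l
    _ ≤ (1 - 2 * l) * r + 2 * l * ((1 - η r ε) * r) := by
        rw [dist_comm a x, dist_comm a]
        gcongr
        · linarith [hl.2]
        · linarith [hl.1]
    _ = (1 - 2 * l * η r ε) * r := by ring

lemma dist_W_le {η : ℝ → ℝ → ℝ} (hU : H.UnifConvex η) {r ε : ℝ} (hr : 0 < r)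
    (hε : ε ∈ Ioc (0:ℝ) 2) {a x y : X} (hxa : dist x a ≤ r) (hya : dist y a ≤ r)
    (hxy : ε * r ≤ dist x y) {l : ℝ} (hl : l ∈ Icc (0:ℝ) 1) :
    dist (H.W x y l) a ≤ (1 - 2 * l * (1 - l) * η r ε) * r := by
  have hη := (hU.1 r ε hr hε).1
  rcases le_total l (1/2) with hle | hge
  · have := H.dist_W_le_of_le_half hU hr hε hxa hya hxy ⟨hl.1, hle⟩
    nlinarith [mul_nonneg (mul_nonneg (mul_nonneg hl.1 hl.1) hη.le) hr.le]
  · have hyx : ε * r ≤ dist y x := by rwa [dist_comm]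
    have := H.dist_W_le_of_le_half hU hr hε hya hxa hyx (l := 1 - l)
      ⟨by linarith [hl.2], by linarith⟩
    rw [H.W3 x y l hl]
    nlinarith [mul_nonneg (mul_nonneg (mul_nonneg (sub_nonneg.2 hl.2) (sub_nonneg.2 hl.2))
      hη.le) hr.le]

lemma ishSeq_mem {C : Set X} (hC : H.ConvexSet C) {T : X → X} (hT : MapsTo T C C)
    {l s : ℕ → ℝ} (hl : ∀ n, l n ∈ Icc (0:ℝ) 1) (hs : ∀ n, s n ∈ Icc (0:ℝ) 1) {x : X}
    (hx : x ∈ C) (n : ℕ) : H.ishSeq T l s x n ∈ C := by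
  induction n with
  | zero => exact hx
  | succ n ih => exact hC _ ih _ (hT (hC _ ih _ (hT ih) _ (hs n))) _ (hl n)

end WHyp

lemma MonotoneModulus.factor_le {η ηt : ℝ → ℝ → ℝ} (hmon : MonotoneModulus η)
    (hfact : ∀ r ε : ℝ, 0 < r → ε ∈ Ioc (0:ℝ) 2 → η r ε = ε * ηt r ε)
    (hinc : ∀ r : ℝ, 0 < r → ∀ ε ε' : ℝ, ε ∈ Ioc (0:ℝ) 2 → ε' ∈ Ioc (0:ℝ) 2 →
      ε ≤ ε' → ηt r ε ≤ ηt r ε')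
    {r s a : ℝ} (hr : 0 < r) (hrs : r ≤ s) (ha : 0 < a) (ha2 : a ≤ 2 * r) :
    ηt s (a / s) ≤ ηt r (a / r) := by
  have hs : 0 < s := hr.trans_le hrs
  have hεr : a / r ∈ Ioc (0:ℝ) 2 := ⟨by positivity, (div_le_iff₀ hr).2 (by linarith)⟩
  have hεs : a / s ∈ Ioc (0:ℝ) 2 := ⟨by positivity, (div_le_iff₀ hs).2 (by nlinarith)⟩
  have hηs := hmon r s _ hr hrs hεs
  rw [hfact s _ hs hεs, hfact r _ hr hεs] at hηs
  exact (le_of_mul_le_mul_left hηs hεs.1).trans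
    (hinc r hr _ _ hεs hεr (div_le_div_of_nonneg_left ha.le hr hrs))

theorem stmt15_general {X : Type*} [MetricSpace X] (H : WHyp X)
    (η : ℝ → ℝ → ℝ) (hU : H.UnifConvex η) (hmon : MonotoneModulus η)
    (C : Set X) (hCconv : H.ConvexSet C)
    (T : X → X) (hT : Set.MapsTo T C C)
    (hTne : ∀ x ∈ C, ∀ y ∈ C, dist (T x) (T y) ≤ dist x y)
    (l s : ℕ → ℝ) (hl : ∀ n, l n ∈ Set.Icc (0:ℝ) 1) (hs : ∀ n, s n ∈ Set.Icc (0:ℝ) 1)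
    (x : X) (hx : x ∈ C)
    (xs : ℕ → X) (hxs : xs = H.ishSeq T l s x)
    (ys : ℕ → X) (hys : ∀ n, ys n = H.W (xs n) (T (xs n)) (s n))
    (p : X) (hp : p ∈ C) (hfix : T p = p)
    (ηt : ℝ → ℝ → ℝ)
    (hfact : ∀ r ε : ℝ, 0 < r → ε ∈ Set.Ioc (0:ℝ) 2 → η r ε = ε * ηt r ε)
    (hinc : ∀ r : ℝ, 0 < r → ∀ ε ε' : ℝ, ε ∈ Set.Ioc (0:ℝ) 2 → ε' ∈ Set.Ioc (0:ℝ) 2 →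
      ε ≤ ε' → ηt r ε ≤ ηt r ε')
    (n : ℕ) (δ a : ℝ) (ha : 0 < a)
    (h1 : dist (xs n) p ≤ δ) (h2 : a ≤ dist (xs n) (T (ys n))) :
    dist (xs (n + 1)) p ≤ dist (xs n) p - 2 * a * l n * (1 - l n) * ηt δ (a / δ) := by
  subst hxs
  set d := dist (H.ishSeq T l s x n) p
  have hxC := H.ishSeq_mem hCconv hT hl hs hx n
  have hTp : ∀ z ∈ C, dist (T z) p ≤ dist z p := fun z hz => by
    simpa only [hfix] using hTne z hz p hp
  have hy : dist (ys n) p ≤ d :=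
    hys n ▸ H.dist_W_le_of_le le_rfl (hTp _ hxC) (hs n)
  have hTy : dist (T (ys n)) p ≤ d :=
    (hTp _ (hys n ▸ hCconv _ hxC _ (hT hxC) _ (hs n))).trans hy
  have ha2 : a ≤ 2 * d := by linarith [dist_triangle_right (H.ishSeq T l s x n) (T (ys n)) p]
  have hd : 0 < d := by linarith
  have hε : a / d ∈ Ioc (0:ℝ) 2 := ⟨by positivity, (div_le_iff₀ hd).2 (by linarith)⟩
  have hnext : H.ishSeq T l s x (n + 1) = H.W (H.ishSeq T l s x n) (T (ys n)) (l n) := by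
    rw [hys n]; rfl
  have hstep : dist (H.ishSeq T l s x (n + 1)) p ≤ (1 - 2 * l n * (1 - l n) * η d (a / d)) * d :=
    hnext ▸ H.dist_W_le hU hd hε le_rfl hTy (by rwa [div_mul_cancel₀ _ hd.ne']) (hl n)
  have hηt := hmon.factor_le hfact hinc hd h1 ha ha2
  rw [hfact d _ hd hε] at hstep
  have hcoef : 0 ≤ 2 * a * l n * (1 - l n) :=
    mul_nonneg (mul_nonneg (by positivity) (hl n).1) (sub_nonneg.2 (hl n).2)
  calc _ ≤ _ := hstep
    _ = d - 2 * a * l n * (1 - l n) * ηt d (a / d) := by field_simp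
    _ ≤ _ := by gcongr

theorem stmt15 {X : Type*} [MetricSpace X] (H : WHyp X)
    (η : ℝ → ℝ → ℝ) (hU : H.UnifConvex η) (hmon : MonotoneModulus η)
    (C : Set X) (hCne : C.Nonempty) (hCconv : H.ConvexSet C)
    (T : X → X) (hT : Set.MapsTo T C C)
    (hTne : ∀ x ∈ C, ∀ y ∈ C, dist (T x) (T y) ≤ dist x y)
    (l s : ℕ → ℝ) (hl : ∀ n, l n ∈ Set.Icc (0:ℝ) 1) (hs : ∀ n, s n ∈ Set.Icc (0:ℝ) 1)
    (x : X) (hx : x ∈ C)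
    (xs : ℕ → X) (hxs : xs = H.ishSeq T l s x)
    (ys : ℕ → X) (hys : ∀ n, ys n = H.W (xs n) (T (xs n)) (s n))
    (p : X) (hp : p ∈ C) (hfix : T p = p)
    (ηt : ℝ → ℝ → ℝ)
    (hfact : ∀ r ε : ℝ, 0 < r → ε ∈ Set.Ioc (0:ℝ) 2 → η r ε = ε * ηt r ε)
    (hinc : ∀ r : ℝ, 0 < r → ∀ ε ε' : ℝ, ε ∈ Set.Ioc (0:ℝ) 2 → ε' ∈ Set.Ioc (0:ℝ) 2 →
      ε ≤ ε' → ηt r ε ≤ ηt r ε')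
    (n : ℕ) (δ a : ℝ) (hδ : 0 < δ) (ha : 0 < a)
    (h1 : dist (xs n) p ≤ δ) (h2 : a ≤ dist (xs n) (T (ys n))) :
    dist (xs (n + 1)) p ≤ dist (xs n) p - 2 * a * l n * (1 - l n) * ηt δ (a / δ) :=
  stmt15_general H η hU hmon C hCconv T hT hTne l s hl hs x hx xs hxs ys hys p hp hfix ηt hfact hinc
    n δ a ha h1 h2
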